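/- Suppose X has exactly two elements. A decision-conflict logit ρ on X is a dual logit if and only if it satisfies axiom A5: for the two distinct elements a, b of X, ρ(o,{a,b})/(2·ρ(a,{a,b})) ≥ 2·ρ(b,{a,b})/ρ(o,{a,b}) (equivalently, ρ(o,{a,b})² ≥ 4·ρ(a,{a,b})·ρ(b,{a,b})). -/

import Mathlib

/-!
On a two-element menu `{a, b}` a dual logit chooses `a` with probability `x * y` and `b` with
probability `(1 - x) * (1 - y)`, where `x, y ∈ (0, 1)` are the binary logit shares of `a`; the
deferral probability `o` then satisfies `o ^ 2 - 4 * (x * y) * ((1 - x) * (1 - y)) = (x - y) ^ 2`.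
Conversely, if a decision-conflict logit chooses `a`, `b` with probabilities `p`, `q` and
`o ^ 2 ≥ 4 * p * q`, then `x` and `y` can be taken to be the roots of `t ^ 2 - (1 + p - q) * t + p`,
which are real by A5 and lie in `(0, 1)`. When `X = {a, b}` every other menu is a singleton, where
both models choose with probability one.
-/

open Finset

variable {X : Type*} [Fintype X] [DecidableEq X]

/-- The probability of choosing the outside option (deferring) at menu `A`. -/
noncomputable def defer (ρ : Finset X → X → ℝ) (A : Finset X) : ℝ :=
  1 - ∑ a ∈ A, ρ A a

/-- `ρ` is a random non-forced choice model on `X`. -/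
def IsRNFC (ρ : Finset X → X → ℝ) : Prop :=
  ∀ A : Finset X, A.Nonempty →
    (∀ a ∈ A, 0 ≤ ρ A a ∧ ρ A a ≤ 1) ∧
    (∀ a, a ∉ A → ρ A a = 0) ∧
    (∑ a ∈ A, ρ A a) ≤ 1

/-- `ρ` is a decision-conflict logit with representation `(u, D)`. -/
def IsDCL (ρ : Finset X → X → ℝ) (u : X → ℝ) (D : Finset X → ℝ) : Prop :=
  (∀ a, 0 < u a) ∧
  (∀ A : Finset X, A.Nonempty → 0 ≤ D A ∧ (D A = 0 ↔ A.card = 1)) ∧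
  (∀ A : Finset X, A.Nonempty → ∀ a ∈ A, ρ A a = u a / ((∑ b ∈ A, u b) + D A))

/-- `ρ` is a dual logit. -/
def IsDualLogit (ρ : Finset X → X → ℝ) : Prop :=
  ∃ v₁ v₂ : X → ℝ, (∀ a, 0 < v₁ a) ∧ (∀ a, 0 < v₂ a) ∧
    ∀ A : Finset X, A.Nonempty → ∀ a ∈ A,
      ρ A a = (v₁ a / ∑ b ∈ A, v₁ b) * (v₂ a / ∑ b ∈ A, v₂ b)

theorem four_mul_mul_one_sub_mul_le_sq (x y : ℝ) :
    4 * (x * y) * ((1 - x) * (1 - y)) ≤ (1 - x * y - (1 - x) * (1 - y)) ^ 2 := by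
  linarith [sq_nonneg (x - y)]

theorem exists_mul_eq_and_one_sub_mul_one_sub_eq {p q : ℝ} (hp : 0 < p) (hq : 0 < q)
    (hpq : p + q < 1) (h : 4 * p * q ≤ (1 - p - q) ^ 2) :
    ∃ x y : ℝ, 0 < x ∧ x < 1 ∧ 0 < y ∧ y < 1 ∧ x * y = p ∧ (1 - x) * (1 - y) = q := by
  set s := 1 + p - q
  have hdisc : 0 ≤ s ^ 2 - 4 * p := by linarith
  set r := √(s ^ 2 - 4 * p)
  have hr0 : 0 ≤ r := Real.sqrt_nonneg _
  have hr2 : r ^ 2 = s ^ 2 - 4 * p := Real.sq_sqrt hdisc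
  have hrs : r < s := (Real.sqrt_lt' (by linarith)).mpr (by linarith)
  have hrs' : r < 2 - s := (Real.sqrt_lt' (by linarith)).mpr (by nlinarith)
  refine ⟨(s + r) / 2, (s - r) / 2, by linarith, by linarith, by linarith, by linarith, ?_, ?_⟩
  · linear_combination (-1 / 4 : ℝ) * hr2
  · linear_combination (-1 / 4 : ℝ) * hr2

theorem div_two_mul_ge_iff_four_mul_le_sq {o p q : ℝ} (ho : 0 < o) (hp : 0 < p) :
    o / (2 * p) ≥ 2 * q / o ↔ 4 * p * q ≤ o ^ 2 := by
  rw [ge_iff_le, div_le_div_iff₀ ho (by positivity)]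
  constructor <;> intro h <;> linarith

variable {ρ : Finset X → X → ℝ}

section

omit [Fintype X] [DecidableEq X]

variable {u : X → ℝ} {D : Finset X → ℝ}

namespace IsDCL

theorem sum_add_pos (h : IsDCL ρ u D) {A : Finset X} (hA : A.Nonempty) :
    0 < ∑ b ∈ A, u b + D A :=
  add_pos_of_pos_of_nonneg (sum_pos (fun b _ => h.1 b) hA) (h.2.1 A hA).1

theorem pos (h : IsDCL ρ u D) {A : Finset X} {a : X} (ha : a ∈ A) : 0 < ρ A a := by
  rw [h.2.2 A ⟨a, ha⟩ a ha]
  exact div_pos (h.1 a) (h.sum_add_pos ⟨a, ha⟩)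

theorem singleton (h : IsDCL ρ u D) (a : X) : ρ {a} a = 1 := by
  have hne : ({a} : Finset X).Nonempty := singleton_nonempty a
  rw [h.2.2 {a} hne a (mem_singleton_self a), sum_singleton,
    (h.2.1 {a} hne).2.mpr (card_singleton a), add_zero, div_self (h.1 a).ne']

theorem defer_eq (h : IsDCL ρ u D) {A : Finset X} (hA : A.Nonempty) :
    defer ρ A = D A / (∑ b ∈ A, u b + D A) := by
  have hS := (h.sum_add_pos hA).ne'
  rw [defer, sum_congr rfl (h.2.2 A hA), ← sum_div]
  field_simp
  ring

theorem defer_pos (h : IsDCL ρ u D) {A : Finset X} (hA : 1 < A.card) : 0 < defer ρ A := by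
  have hne : A.Nonempty := card_pos.mp (by omega)
  have hD : D A ≠ 0 := fun h0 => by have := (h.2.1 A hne).2.mp h0; omega
  rw [h.defer_eq hne]
  exact div_pos (lt_of_le_of_ne (h.2.1 A hne).1 (Ne.symm hD)) (h.sum_add_pos hne)

end IsDCL

end

section

omit [Fintype X]

theorem defer_pair {a b : X} (hab : a ≠ b) :
    defer ρ {a, b} = 1 - ρ {a, b} a - ρ {a, b} b := by
  rw [defer, sum_pair hab]
  ring

namespace IsDualLogit

theorem four_mul_le_defer_sq (hρ : IsDualLogit ρ) {a b : X} (hab : a ≠ b) :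
    4 * ρ {a, b} a * ρ {a, b} b ≤ defer ρ {a, b} ^ 2 := by
  obtain ⟨v₁, v₂, hv₁, hv₂, hv⟩ := hρ
  have hne : ({a, b} : Finset X).Nonempty := insert_nonempty a {b}
  have share_b : ∀ v : X → ℝ, (∀ c, 0 < v c) →
      v b / ∑ c ∈ {a, b}, v c = 1 - v a / ∑ c ∈ {a, b}, v c := by
    intro v hv
    have : v a + v b ≠ 0 := (add_pos (hv a) (hv b)).ne'
    rw [sum_pair hab]
    field_simp
    ring
  have ha := hv _ hne a (mem_insert_self a {b})
  have hb := hv _ hne b (mem_insert_of_mem (mem_singleton_self b))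
  rw [share_b v₁ hv₁, share_b v₂ hv₂] at hb
  rw [defer_pair hab, ha, hb]
  exact four_mul_mul_one_sub_mul_le_sq _ _

end IsDualLogit

end

theorem isDualLogit_of_pair (hX : Fintype.card X = 2) {a b : X} (hab : a ≠ b)
    (hsingle : ∀ c, ρ {c} c = 1) {x y : ℝ} (hx0 : 0 < x) (hx1 : x < 1) (hy0 : 0 < y)
    (hy1 : y < 1) (ha : ρ {a, b} a = x * y) (hb : ρ {a, b} b = (1 - x) * (1 - y)) :
    IsDualLogit ρ := by
  have huniv : ({a, b} : Finset X) = univ := eq_univ_of_card _ (by rw [card_pair hab, hX])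
  let weight (t : ℝ) (c : X) : ℝ := if c = a then t else 1 - t
  have weight_pos : ∀ t, 0 < t → t < 1 → ∀ c, 0 < weight t c := by
    intro t ht0 ht1 c
    by_cases hc : c = a <;> simp only [weight, hc, if_true, if_false] <;> linarith
  have weight_sum : ∀ t, ∑ c ∈ {a, b}, weight t c = 1 := by
    intro t
    simp [weight, sum_pair hab, hab.symm]
  refine ⟨weight x, weight y, weight_pos x hx0 hx1, weight_pos y hy0 hy1, ?_⟩
  intro A hA c hc
  obtain ⟨d, rfl⟩ | hA2 := hA.exists_eq_singleton_or_nontrivial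
  · obtain rfl := mem_singleton.mp hc
    rw [hsingle, sum_singleton, sum_singleton, div_self (weight_pos x hx0 hx1 c).ne',
      div_self (weight_pos y hy0 hy1 c).ne', one_mul]
  · have hAuniv : A = {a, b} := by
      rw [huniv]
      refine eq_univ_of_card A (le_antisymm (card_le_univ A) ?_)
      rw [hX]
      exact one_lt_card_iff_nontrivial.mpr hA2
    subst hAuniv
    rw [weight_sum, weight_sum, div_one, div_one]
    rcases mem_insert.mp hc with rfl | hcb
    · simp only [weight, if_pos rfl, ha]
    obtain rfl := mem_singleton.mp hcb
    simp only [weight, if_neg hab.symm, hb]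

theorem stmt10_general (hX : Fintype.card X = 2) (ρ : Finset X → X → ℝ)
    (u : X → ℝ) (D : Finset X → ℝ) (h : IsDCL ρ u D) :
    IsDualLogit ρ ↔
      ∀ a b : X, a ≠ b →
        defer ρ {a, b} / (2 * ρ {a, b} a) ≥ 2 * ρ {a, b} b / defer ρ {a, b} := by
  have hpos : ∀ {a b : X}, a ≠ b → 0 < defer ρ {a, b} ∧ 0 < ρ {a, b} a ∧ 0 < ρ {a, b} b :=
    fun hab => ⟨h.defer_pos (by rw [card_pair hab]; omega), h.pos (mem_insert_self _ _),
      h.pos (mem_insert_of_mem (mem_singleton_self _))⟩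
  constructor
  · intro hdual a b hab
    rw [div_two_mul_ge_iff_four_mul_le_sq (hpos hab).1 (hpos hab).2.1]
    exact hdual.four_mul_le_defer_sq hab
  · intro hA5
    obtain ⟨a, b, hab, -⟩ := card_eq_two.mp (card_univ.trans hX)
    obtain ⟨ho, hp, hq⟩ := hpos hab
    have hA5ab := (div_two_mul_ge_iff_four_mul_le_sq ho hp).mp (hA5 a b hab)
    rw [defer_pair hab] at ho hA5ab
    obtain ⟨x, y, hx0, hx1, hy0, hy1, hxy, hxy'⟩ :=
      exists_mul_eq_and_one_sub_mul_one_sub_eq hp hq (by linarith) hA5ab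
    exact isDualLogit_of_pair hX hab h.singleton hx0 hx1 hy0 hy1 hxy.symm hxy'.symm

/-- When `X` has exactly two elements, a decision-conflict logit is a dual logit iff it
satisfies Axiom A5 (Constrained Odds Symmetry). -/
theorem stmt10 (hX : Fintype.card X = 2) (ρ : Finset X → X → ℝ) (hρ : IsRNFC ρ)
    (u : X → ℝ) (D : Finset X → ℝ) (h : IsDCL ρ u D) :
    IsDualLogit ρ ↔
      ∀ a b : X, a ≠ b →
        defer ρ {a, b} / (2 * ρ {a, b} a) ≥ 2 * ρ {a, b} b / defer ρ {a, b} :=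
  stmt10_general hX ρ u D h
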